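/- arXiv:2603.03560 — 4 statements merged into one kernel-verified Lean document; each statement's English description precedes it below -/
import Mathlib

section
/- The vector x* with components x*_n = (ω̂_n - b)/α_n - (2a/α_n)·(Σ_j (ω̂_j - b)/α_j)/(1 + 2a Σ_j 1/α_j) is the unique global maximizer over ℝ^N of the function u_R(x) = Σ_n (ω̂_n x_n - (α_n/2) x_n²) - a(Σ_n x_n)² - b(Σ_n x_n) - c. -/
/-!
Since `u_R` is quadratic with Hessian `-diag α - 2a·𝟙𝟙ᵀ`, at any critical point `y` one has exactly
`u_R x = u_R y - ∑ α_n/2 (x_n - y_n)² - a (X - Y)²`, which is `< u_R y` for `x ≠ y`.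
The first-order conditions `α_n y_n = ω̂_n - b - 2aY` give `y_n` in terms of `Y`; summing them
over `n` determines `Y = (∑ (ω̂_j - b)/α_j) / (1 + 2a ∑ 1/α_j)`, which yields `x*`.
-/

open Finset

namespace Aggregator

variable {ι : Type*} [Fintype ι]

noncomputable def welfare (α ω : ι → ℝ) (a b c : ℝ) (x : ι → ℝ) : ℝ :=
  ∑ n, (ω n * x n - α n / 2 * x n ^ 2) - (a * (∑ n, x n) ^ 2 + b * ∑ n, x n + c)

/-- The first-order condition `∇ welfare y = 0`. -/
def IsCritical (α ω : ι → ℝ) (a b : ℝ) (y : ι → ℝ) : Prop :=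
  ∀ n, α n * y n = ω n - b - 2 * a * ∑ m, y m

noncomputable def bestResponse (α ω : ι → ℝ) (a b : ℝ) (n : ι) : ℝ :=
  (ω n - b) / α n -
    (2 * a / α n) * ((∑ j, (ω j - b) / α j) / (1 + 2 * a * ∑ j, 1 / α j))

variable {α ω x y : ι → ℝ} {a b c : ℝ}

theorem welfare_eq_sub_of_isCritical (hy : IsCritical α ω a b y) :
    welfare α ω a b c x = welfare α ω a b c y - ∑ n, α n / 2 * (x n - y n) ^ 2
      - a * (∑ n, x n - ∑ n, y n) ^ 2 := by
  have hterm : ∀ n, ω n * x n - α n / 2 * x n ^ 2 = ω n * y n - α n / 2 * y n ^ 2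
      - α n / 2 * (x n - y n) ^ 2 + (b + 2 * a * ∑ m, y m) * (x n - y n) := fun n => by
    linear_combination (y n - x n) * hy n
  simp only [welfare, sum_congr rfl fun n _ => hterm n, sum_add_distrib, sum_sub_distrib,
    ← mul_sum]
  ring

theorem welfare_lt_of_isCritical (hα : ∀ n, 0 < α n) (ha : 0 ≤ a)
    (hy : IsCritical α ω a b y) (hxy : x ≠ y) :
    welfare α ω a b c x < welfare α ω a b c y := by
  obtain ⟨n₀, hn₀⟩ : ∃ n, x n ≠ y n := Function.ne_iff.mp hxy
  have hdev : 0 < ∑ n, α n / 2 * (x n - y n) ^ 2 :=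
    sum_pos' (fun n _ => by have := hα n; positivity)
      ⟨n₀, mem_univ _, by have := hα n₀; have := sub_ne_zero.mpr hn₀; positivity⟩
  have hagg : 0 ≤ a * (∑ n, x n - ∑ n, y n) ^ 2 := by positivity
  rw [welfare_eq_sub_of_isCritical hy]
  linarith

theorem isCritical_bestResponse (hα : ∀ n, α n ≠ 0)
    (hden : 1 + 2 * a * ∑ j, 1 / α j ≠ 0) :
    IsCritical α ω a b (bestResponse α ω a b) := by
  set K := (∑ j, (ω j - b) / α j) / (1 + 2 * a * ∑ j, 1 / α j) with hK
  have hsum : ∑ n, bestResponse α ω a b n = K := by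
    have hterm : ∀ n, bestResponse α ω a b n = (ω n - b) / α n - 2 * a * K * (1 / α n) :=
      fun n => by rw [bestResponse, ← hK]; ring
    rw [sum_congr rfl fun n _ => hterm n, sum_sub_distrib, ← mul_sum, hK]
    field_simp
    ring
  intro n
  rw [hsum, bestResponse, ← hK]
  field_simp [hα n]

end Aggregator

theorem aggregator_best_response_unique_max_general
    (N : ℕ)
    (α : Fin N → ℝ) (hα : ∀ n, 0 < α n)
    (a b c : ℝ) (ha : 0 < a)
    (ωhat : Fin N → ℝ)
    (uR : (Fin N → ℝ) → ℝ)
    (huR : ∀ x, uR x =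
      (∑ n, (ωhat n * x n - α n / 2 * (x n) ^ 2)) -
        (a * (∑ n, x n) ^ 2 + b * (∑ n, x n) + c))
    (xstar : Fin N → ℝ)
    (hxstar : ∀ n, xstar n =
      (ωhat n - b) / α n -
        (2 * a / α n) * ((∑ j, (ωhat j - b) / α j) / (1 + 2 * a * ∑ j, 1 / α j))) :
    ∀ x : Fin N → ℝ, x ≠ xstar → uR x < uR xstar := by
  obtain rfl : uR = Aggregator.welfare α ωhat a b c := funext huR
  obtain rfl : xstar = Aggregator.bestResponse α ωhat a b := funext hxstar
  have hden : 0 < 1 + 2 * a * ∑ j, 1 / α j := by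
    have := sum_nonneg fun j (_ : j ∈ univ) => (one_div_pos.mpr (hα j)).le
    positivity
  exact fun x hx => Aggregator.welfare_lt_of_isCritical hα ha.le
    (Aggregator.isCritical_bestResponse (fun n => (hα n).ne') hden.ne') hx

/-- The given allocation vector is the unique global maximizer of the aggregator's
quadratic social-welfare function. -/
theorem aggregator_best_response_unique_max
    (N : ℕ) (hN : 1 ≤ N)
    (α : Fin N → ℝ) (hα : ∀ n, 0 < α n)
    (a b c : ℝ) (ha : 0 < a) (hb : 0 ≤ b) (hc : 0 ≤ c)
    (ωhat : Fin N → ℝ)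
    (uR : (Fin N → ℝ) → ℝ)
    (huR : ∀ x, uR x =
      (∑ n, (ωhat n * x n - α n / 2 * (x n) ^ 2)) -
        (a * (∑ n, x n) ^ 2 + b * (∑ n, x n) + c))
    (xstar : Fin N → ℝ)
    (hxstar : ∀ n, xstar n =
      (ωhat n - b) / α n -
        (2 * a / α n) * ((∑ j, (ωhat j - b) / α j) / (1 + 2 * a * ∑ j, 1 / α j))) :
    ∀ x : Fin N → ℝ, x ≠ xstar → uR x < uR xstar :=
  aggregator_best_response_unique_max_general N α hα a b c ha ωhat uR huR xstar hxstar
end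

section
/- The expected allocation E[x*_n] of consumer n in the N-consumer game, when the aggregator's beliefs about others equal their prior means E[ω_j], equals (ω̂_n - b_n^eff)/(α_n + 2a_n^eff), where a_n^eff = a/(1 + 2a Σ_{j≠n} 1/α_j) and b_n^eff = b + 2a(Σ_{j≠n}(E[ω_j] - b)/α_j)/(1 + 2a Σ_{j≠n} 1/α_j). That is, the N-consumer best response reduces to the best response of an effective two-player game with quadratic receiver utility ω_n x - (α_n/2 + a_n^eff)x² - b_n^eff x. -/
/-!
Write `D = 1 + 2aS` with `S = ∑_{j ≠ n} 1/α_j` and `T = ∑_{j ≠ n} (ω̂_j - b)/α_j`.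
Splitting consumer `n` off the two full sums gives `1 + 2a ∑_j 1/α_j = (α_n D + 2a)/α_n`, and
then both sides reduce to `((ω̂_n - b) D - 2aT)/(α_n D + 2a)`: on the right after multiplying
numerator and denominator by `D`.
-/

open Finset

theorem best_response_eq_effective {α a b ω S T : ℝ} (hα : α ≠ 0) (hD : 1 + 2 * a * S ≠ 0)
    (hαD : α * (1 + 2 * a * S) + 2 * a ≠ 0) :
    (ω - b) / α - (2 * a / α) * (((ω - b) / α + T) / (1 + 2 * a * (1 / α + S))) =
      (ω - (b + 2 * a * T / (1 + 2 * a * S))) / (α + 2 * (a / (1 + 2 * a * S))) := by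
  have hfull : 1 + 2 * a * (1 / α + S) = (α * (1 + 2 * a * S) + 2 * a) / α := by
    field_simp
    ring
  have hαeff : α + 2 * (a / (1 + 2 * a * S)) = (α * (1 + 2 * a * S) + 2 * a) / (1 + 2 * a * S) := by
    field_simp
  calc (ω - b) / α - (2 * a / α) * (((ω - b) / α + T) / (1 + 2 * a * (1 / α + S)))
      = ((ω - b) * (1 + 2 * a * S) - 2 * a * T) / (α * (1 + 2 * a * S) + 2 * a) := by
        rw [hfull]
        field_simp
        ring
    _ = (ω - (b + 2 * a * T / (1 + 2 * a * S))) / (α + 2 * (a / (1 + 2 * a * S))) := by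
        rw [hαeff]
        field_simp
        ring

theorem effective_subgame_best_response_general
    (N : ℕ)
    (α : Fin N → ℝ) (hα : ∀ n, 0 < α n)
    (a : ℝ) (ha : 0 < a) (b : ℝ)
    (n : Fin N)
    (ωhat : Fin N → ℝ)  -- beliefs, with `ωhat j = E[ω j]` for `j ≠ n`
    (aeff beff : ℝ)
    (haeff : aeff = a / (1 + 2 * a * ∑ j ∈ univ.erase n, 1 / α j))
    (hbeff : beff = b + 2 * a * (∑ j ∈ univ.erase n, (ωhat j - b) / α j) /
        (1 + 2 * a * ∑ j ∈ univ.erase n, 1 / α j)) :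
    (ωhat n - b) / α n -
        (2 * a / α n) * ((∑ j, (ωhat j - b) / α j) / (1 + 2 * a * ∑ j, 1 / α j)) =
      (ωhat n - beff) / (α n + 2 * aeff) := by
  have split_off_n (f : Fin N → ℝ) : ∑ j, f j = f n + ∑ j ∈ univ.erase n, f j :=
    (add_sum_erase _ _ (mem_univ n)).symm
  have hS : 0 ≤ ∑ j ∈ univ.erase n, 1 / α j :=
    sum_nonneg fun j _ => (one_div_pos.mpr (hα j)).le
  have hαn := hα n
  rw [split_off_n, split_off_n, haeff, hbeff]
  exact best_response_eq_effective hαn.ne' (by positivity) (by positivity)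

/-- The expected allocation of consumer `n`, when beliefs about the others equal their
prior means, coincides with the best response of the effective two-player game. -/
theorem effective_subgame_best_response
    (N : ℕ) (hN : 1 ≤ N)
    (α : Fin N → ℝ) (hα : ∀ n, 0 < α n)
    (a : ℝ) (ha : 0 < a) (b : ℝ)
    (n : Fin N)
    (ωhat : Fin N → ℝ)  -- beliefs, with `ωhat j = E[ω j]` for `j ≠ n`
    (aeff beff : ℝ)
    (haeff : aeff = a / (1 + 2 * a * ∑ j ∈ univ.erase n, 1 / α j))
    (hbeff : beff = b + 2 * a * (∑ j ∈ univ.erase n, (ωhat j - b) / α j) /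
        (1 + 2 * a * ∑ j ∈ univ.erase n, 1 / α j)) :
    (ωhat n - b) / α n -
        (2 * a / α n) * ((∑ j, (ωhat j - b) / α j) / (1 + 2 * a * ∑ j, 1 / α j)) =
      (ωhat n - beff) / (α n + 2 * aeff) :=
  effective_subgame_best_response_general N α hα a ha b n ωhat aeff beff haeff hbeff
end

section
/- For every consumer n, the bias-minimizing price p_n* = (α_n b_n^eff + 2 a_n^eff E[ω_n])/(α_n + 2 a_n^eff), with a_n^eff = a/(1 + 2a Σ_{j≠n} 1/α_j) and b_n^eff = b + 2a(Σ_{j≠n}(E[ω_j]-b)/α_j)/(1 + 2a Σ_{j≠n} 1/α_j), is independent of n, and equals the uniform price p* = (b + 2a Σ_{j=1}^N E[ω_j]/α_j)/(1 + 2a Σ_{j=1}^N 1/α_j). -/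
/-!
With `D = 1 + 2a∑_{j≠n} 1/α_j`, the effective intercept of consumer `n` is
`(b + 2a∑_{j≠n} E[ω_j]/α_j) / D` and the effective slope is `a / D`. Substituting both into the
subgame price and multiplying through by `D / α_n` adds consumer `n`'s own terms `E[ω_n]/α_n` and
`1/α_n` to the two sums, which then run over all consumers.
-/

open Finset

theorem effective_intercept_eq_div {ι : Type*} (s : Finset ι) (α e : ι → ℝ) (a b : ℝ)
    (hD : 1 + 2 * a * ∑ j ∈ s, 1 / α j ≠ 0) :
    b + 2 * a * (∑ j ∈ s, (e j - b) / α j) / (1 + 2 * a * ∑ j ∈ s, 1 / α j) =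
      (b + 2 * a * ∑ j ∈ s, e j / α j) / (1 + 2 * a * ∑ j ∈ s, 1 / α j) := by
  have hsum : ∑ j ∈ s, (e j - b) / α j = ∑ j ∈ s, e j / α j - b * ∑ j ∈ s, 1 / α j := by
    simp only [sub_div, sum_sub_distrib, mul_sum, mul_one_div]
  rw [hsum, eq_div_iff hD, add_mul, div_mul_cancel₀ _ hD]
  ring

theorem subgame_price_eq_div {α D : ℝ} (hα : α ≠ 0) (hD : D ≠ 0) (a B e : ℝ) :
    (α * (B / D) + 2 * (a / D) * e) / (α + 2 * (a / D)) =
      (B + 2 * a * (e / α)) / (D + 2 * a * (1 / α)) := by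
  have hleft : (α * (B / D) + 2 * (a / D) * e) / (α + 2 * (a / D)) =
      ((α * B + 2 * a * e) / D) / ((α * D + 2 * a) / D) := by
    congr 1 <;> field_simp
  have hright : (B + 2 * a * (e / α)) / (D + 2 * a * (1 / α)) =
      ((α * B + 2 * a * e) / α) / ((α * D + 2 * a) / α) := by
    congr 1 <;> field_simp
  rw [hleft, hright, div_div_div_cancel_right₀ hD, div_div_div_cancel_right₀ hα]

theorem uniform_optimal_price_general
    (N : ℕ)
    (α : Fin N → ℝ) (hα : ∀ n, 0 < α n)
    (a : ℝ) (ha : 0 < a) (b : ℝ)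
    (Eω : Fin N → ℝ)
    (aeff beff pstar : Fin N → ℝ)
    (haeff : ∀ n, aeff n = a / (1 + 2 * a * ∑ j ∈ univ.erase n, 1 / α j))
    (hbeff : ∀ n, beff n = b + 2 * a * (∑ j ∈ univ.erase n, (Eω j - b) / α j) /
        (1 + 2 * a * ∑ j ∈ univ.erase n, 1 / α j))
    (hpstar : ∀ n, pstar n = (α n * beff n + 2 * aeff n * Eω n) / (α n + 2 * aeff n)) :
    ∀ n, pstar n = (b + 2 * a * ∑ j, Eω j / α j) / (1 + 2 * a * ∑ j, 1 / α j) := by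
  intro n
  have hD : 1 + 2 * a * ∑ j ∈ univ.erase n, 1 / α j ≠ 0 := by
    have hS : 0 ≤ ∑ j ∈ univ.erase n, 1 / α j :=
      sum_nonneg fun j _ => (one_div_pos.2 (hα j)).le
    have := mul_nonneg (mul_nonneg zero_le_two ha.le) hS
    linarith
  rw [hpstar, haeff, hbeff, effective_intercept_eq_div _ α Eω a b hD,
    subgame_price_eq_div (hα n).ne' hD, ← add_sum_erase _ _ (mem_univ n),
    ← add_sum_erase _ (fun j => 1 / α j) (mem_univ n)]
  congr 1 <;> ring

/-- The bias-minimizing price of every consumer subgame is the same, and equals the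
uniform system-wide price `p*`. -/
theorem uniform_optimal_price
    (N : ℕ) (hN : 1 ≤ N)
    (α : Fin N → ℝ) (hα : ∀ n, 0 < α n)
    (a : ℝ) (ha : 0 < a) (b : ℝ)
    (Eω : Fin N → ℝ)
    (aeff beff pstar : Fin N → ℝ)
    (haeff : ∀ n, aeff n = a / (1 + 2 * a * ∑ j ∈ univ.erase n, 1 / α j))
    (hbeff : ∀ n, beff n = b + 2 * a * (∑ j ∈ univ.erase n, (Eω j - b) / α j) /
        (1 + 2 * a * ∑ j ∈ univ.erase n, 1 / α j))
    (hpstar : ∀ n, pstar n = (α n * beff n + 2 * aeff n * Eω n) / (α n + 2 * aeff n)) :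
    ∀ n, pstar n = (b + 2 * a * ∑ j, Eω j / α j) / (1 + 2 * a * ∑ j, 1 / α j) :=
  uniform_optimal_price_general N α hα a ha b Eω aeff beff pstar haeff hbeff hpstar
end

section
/- Let γ ∈ (0,1), δ ∈ ℝ, and let θ be a random variable supported on [θ̲, θ̄] with θ̲ < θ̄ and mean E[θ]. Define D(μ) = ½(E[γθ+δ | θ ≤ μ] + E[γθ+δ | θ > μ]) - μ. If (2-γ)θ̲ - γE[θ] < 2δ < (2-γ)θ̄ - γE[θ], then lim_{μ→θ̲⁺} D(μ) > 0 and lim_{μ→θ̄⁻} D(μ) < 0, where the limits equal ½(g(θ̲) + E[g(θ)]) - θ̲ and ½(g(θ̄) + E[g(θ)]) - θ̄ respectively with g(θ) = γθ + δ; hence by continuity D has a root μ₁ ∈ (θ̲, θ̄), i.e., a two-interval informative equilibrium boundary exists. -/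
open MeasureTheory ProbabilityTheory Filter Set Topology

/-!
Write `g(t) = γt + δ` and let `ν` be the law of `θ`. Then `D(μ)` is half the sum of the
`ν`-averages of `g` over `(-∞, μ]` and `(μ, ∞)`, minus `μ`. Since `ν` has no atoms and charges
every subinterval of `[θ̲, θ̄]`, both averages are continuous on `(θ̲, θ̄)`. As `μ → θ̲⁺` the lower
set shrinks to the left endpoint of the support, so its average tends to `g(θ̲)`, while the upper
set increases to a set of full measure, so its average tends to `E[g(θ)]`; symmetrically at `θ̄`.
The price condition says exactly that the two limits of `D` have opposite signs, and the
intermediate value theorem gives the root.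
-/

theorem exists_mem_Ioo_eq_zero_of_tendsto {f : ℝ → ℝ} {a b A B : ℝ} (hab : a < b)
    (hf : ContinuousOn f (Ioo a b)) (ha : Tendsto f (𝓝[>] a) (𝓝 A))
    (hb : Tendsto f (𝓝[<] b) (𝓝 B)) (hA : 0 < A) (hB : B < 0) :
    ∃ c ∈ Ioo a b, f c = 0 := by
  obtain ⟨a', hfa', ha'⟩ := ((ha.eventually (lt_mem_nhds hA)).and (Ioo_mem_nhdsGT hab)).exists
  obtain ⟨b', hfb', hb'⟩ :=
    ((hb.eventually (gt_mem_nhds hB)).and (Ioo_mem_nhdsLT ha'.2)).exists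
  have hsub : Icc a' b' ⊆ Ioo a b := Icc_subset_Ioo ha'.1 hb'.2
  obtain ⟨c, hc, hfc⟩ :=
    intermediate_value_Icc' hb'.1.le (hf.mono hsub) ⟨hfb'.le, hfa'.le⟩
  exact ⟨c, hsub hc, hfc⟩

section SetAverage

variable {α E : Type*} [MeasurableSpace α] [NormedAddCommGroup E] [NormedSpace ℝ E]

theorem tendsto_setAverage_of_ae_dist_lt [PseudoMetricSpace α] [CompleteSpace E] {ι : Type*}
    {ν : Measure α} [IsFiniteMeasure ν] {g : α → E} {a : α} {l : Filter ι} {S : ι → Set α}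
    (hg : ContinuousAt g a) (hgi : Integrable g ν) (hS0 : ∀ᶠ i in l, ν (S i) ≠ 0)
    (hS : ∀ r > 0, ∀ᶠ i in l, ∀ᵐ x ∂ν.restrict (S i), dist x a < r) :
    Tendsto (fun i => ⨍ x in S i, g x ∂ν) l (𝓝 (g a)) := by
  refine Metric.tendsto_nhds.2 fun ε hε => ?_
  obtain ⟨r, hr, hgr⟩ := Metric.continuousAt_iff.1 hg (ε / 2) (half_pos hε)
  filter_upwards [hS0, hS r hr] with i hSi hae
  have hmem := (convex_closedBall (g a) (ε / 2)).set_average_mem Metric.isClosed_closedBall hSi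
    (measure_ne_top _ _) (hae.mono fun x hx => (hgr hx).le) hgi.integrableOn
  exact (Metric.mem_closedBall.1 hmem).trans_lt (half_lt_self hε)

theorem setAverage_map {Ω : Type*} [MeasurableSpace Ω] {P : Measure Ω} {θ : Ω → α}
    (hθ : AEMeasurable θ P) {s : Set α} (hs : MeasurableSet s) {g : α → ℝ}
    (hg : AEStronglyMeasurable g (P.map θ)) :
    ⨍ t in s, g t ∂(P.map θ) = (∫ ω in θ ⁻¹' s, g (θ ω) ∂P) / (P (θ ⁻¹' s)).toReal := by
  rw [setAverage_eq, setIntegral_map hs hg hθ, measureReal_def,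
    Measure.map_apply_of_aemeasurable hθ hs, smul_eq_mul, div_eq_inv_mul]

theorem withDensity_ofReal_apply_ne_zero {μ : Measure α} {s t : Set α} {f : α → ℝ}
    (hs : MeasurableSet s) (hf : AEMeasurable f (μ.restrict s)) (hf_pos : ∀ x ∈ s, 0 < f x)
    (hts : t ⊆ s) (ht : μ t ≠ 0) :
    (μ.restrict s).withDensity (fun x => ENNReal.ofReal (f x)) t ≠ 0 := by
  rw [Ne, withDensity_apply_eq_zero' hf.ennreal_ofReal, Measure.restrict_apply' hs]
  refine fun h => ht (measure_mono_null (fun x hx => ?_) h)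
  exact ⟨⟨by simpa using hf_pos x (hts hx), hx⟩, hts hx⟩

end SetAverage

section RealLine

variable {ν : Measure ℝ} {g : ℝ → ℝ} {lo hi : ℝ}

theorem continuousAt_setAverage_Iic [IsFiniteMeasure ν] [NullSingletonClass ν]
    (hgi : Integrable g ν) {x : ℝ} (hx : ν (Iic x) ≠ 0) :
    ContinuousAt (fun y => ⨍ t in Iic y, g t ∂ν) x := by
  have hprim : ∀ h : ℝ → ℝ, Integrable h ν → ContinuousAt (fun y => ∫ t in Iic y, h t ∂ν) x :=
    fun h hh => (hh.integrableOn.continuousOn_Iic_primitive_Iic (a₀ := x + 1)).continuousAt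
      (Iic_mem_nhds (lt_add_one x))
  have hmass : ContinuousAt (fun y => ν.real (Iic y)) x := by
    simpa using hprim (fun _ => 1) (integrable_const 1)
  simp_rw [setAverage_eq]
  exact (hmass.inv₀ (by simpa [measureReal_def, ENNReal.toReal_eq_zero_iff] using hx)).smul
    (hprim g hgi)

theorem continuousAt_setAverage_Ioi [IsFiniteMeasure ν] [NullSingletonClass ν]
    (hgi : Integrable g ν) {x : ℝ} (hx : ν (Ioi x) ≠ 0) :
    ContinuousAt (fun y => ⨍ t in Ioi y, g t ∂ν) x := by
  have hprim : ∀ h : ℝ → ℝ, Integrable h ν → ContinuousAt (fun y => ∫ t in Ioi y, h t ∂ν) x :=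
    fun h hh => (hh.integrableOn.continuousOn_Ici_primitive_Ioi (a₀ := x - 1)).continuousAt
      (Ici_mem_nhds (sub_one_lt x))
  have hmass : ContinuousAt (fun y => ν.real (Ioi y)) x := by
    simpa using hprim (fun _ => 1) (integrable_const 1)
  simp_rw [setAverage_eq]
  exact (hmass.inv₀ (by simpa [measureReal_def, ENNReal.toReal_eq_zero_iff] using hx)).smul
    (hprim g hgi)

theorem measure_Iic_ne_zero_of_forall_Ioo
    (hpos : ∀ a b, lo ≤ a → a < b → b ≤ hi → ν (Ioo a b) ≠ 0) {x : ℝ} (hlo : lo < x)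
    (hhi : x ≤ hi) : ν (Iic x) ≠ 0 := fun h =>
  hpos lo x le_rfl hlo hhi (measure_mono_null (Ioo_subset_Ioc_self.trans Ioc_subset_Iic_self) h)

theorem measure_Ioi_ne_zero_of_forall_Ioo
    (hpos : ∀ a b, lo ≤ a → a < b → b ≤ hi → ν (Ioo a b) ≠ 0) {x : ℝ} (hlo : lo ≤ x)
    (hhi : x < hi) : ν (Ioi x) ≠ 0 := fun h =>
  hpos x hi hlo hhi le_rfl (measure_mono_null Ioo_subset_Ioi_self h)

theorem setAverage_eq_integral_of_ae_mem [IsProbabilityMeasure ν] {s : Set ℝ}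
    (hs : ∀ᵐ t ∂ν, t ∈ s) : ⨍ t in s, g t ∂ν = ∫ t, g t ∂ν := by
  rw [Measure.restrict_eq_self_of_ae_mem hs, average_eq_integral]

theorem Continuous.integrable_of_ae_mem_Icc [IsFiniteMeasure ν] (hg : Continuous g)
    (hsupp : ∀ᵐ t ∂ν, t ∈ Icc lo hi) : Integrable g ν := by
  rw [← Measure.restrict_eq_self_of_ae_mem hsupp]
  exact hg.integrableOn_Icc

end RealLine

noncomputable def twoIntervalGap (ν : Measure ℝ) (g : ℝ → ℝ) (μ : ℝ) : ℝ :=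
  (1 / 2) * ((⨍ t in Iic μ, g t ∂ν) + ⨍ t in Ioi μ, g t ∂ν) - μ

namespace twoIntervalGap

variable {ν : Measure ℝ} [NullSingletonClass ν] {g : ℝ → ℝ} {lo hi : ℝ}

theorem continuousOn [IsFiniteMeasure ν] (hgi : Integrable g ν)
    (hpos : ∀ a b, lo ≤ a → a < b → b ≤ hi → ν (Ioo a b) ≠ 0) :
    ContinuousOn (twoIntervalGap ν g) (Ioo lo hi) := fun _ hx =>
  ContinuousAt.continuousWithinAt <| (continuousAt_const.mul
    ((continuousAt_setAverage_Iic hgi (measure_Iic_ne_zero_of_forall_Ioo hpos hx.1 hx.2.le)).add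
      (continuousAt_setAverage_Ioi hgi (measure_Ioi_ne_zero_of_forall_Ioo hpos hx.1.le hx.2)))).sub
    continuousAt_id

theorem tendsto_nhdsGT [IsProbabilityMeasure ν] (hlohi : lo < hi) (hg : Continuous g)
    (hgi : Integrable g ν) (hsupp : ∀ᵐ t ∂ν, t ∈ Icc lo hi)
    (hpos : ∀ a b, lo ≤ a → a < b → b ≤ hi → ν (Ioo a b) ≠ 0) :
    Tendsto (twoIntervalGap ν g) (𝓝[>] lo) (𝓝 ((1 / 2) * (g lo + ∫ t, g t ∂ν) - lo)) := by
  have hlower : Tendsto (fun μ => ⨍ t in Iic μ, g t ∂ν) (𝓝[>] lo) (𝓝 (g lo)) := by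
    refine tendsto_setAverage_of_ae_dist_lt hg.continuousAt hgi ?_ fun r hr => ?_
    · filter_upwards [Ioo_mem_nhdsGT hlohi] with x hx
      exact measure_Iic_ne_zero_of_forall_Ioo hpos hx.1 hx.2.le
    · filter_upwards [Ioo_mem_nhdsGT (lt_add_of_pos_right lo hr)] with x hx
      filter_upwards [ae_restrict_mem measurableSet_Iic, ae_restrict_of_ae hsupp] with t htx ht
      rw [Real.dist_eq, abs_of_nonneg (sub_nonneg.2 ht.1)]
      linarith [hx.2, show t ≤ x from htx]
  have hupper : Tendsto (fun μ => ⨍ t in Ioi μ, g t ∂ν) (𝓝[>] lo) (𝓝 (∫ t, g t ∂ν)) := by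
    have hfull : ∀ᵐ t ∂ν, t ∈ Ioi lo := by
      filter_upwards [hsupp, ν.ae_ne lo] with t ht hne using lt_of_le_of_ne ht.1 hne.symm
    rw [← setAverage_eq_integral_of_ae_mem hfull]
    exact (continuousAt_setAverage_Ioi hgi
      (measure_Ioi_ne_zero_of_forall_Ioo hpos le_rfl hlohi)).tendsto.mono_left nhdsWithin_le_nhds
  exact ((hlower.add hupper).const_mul _).sub (tendsto_id.mono_left nhdsWithin_le_nhds)

theorem tendsto_nhdsLT [IsProbabilityMeasure ν] (hlohi : lo < hi) (hg : Continuous g)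
    (hgi : Integrable g ν) (hsupp : ∀ᵐ t ∂ν, t ∈ Icc lo hi)
    (hpos : ∀ a b, lo ≤ a → a < b → b ≤ hi → ν (Ioo a b) ≠ 0) :
    Tendsto (twoIntervalGap ν g) (𝓝[<] hi) (𝓝 ((1 / 2) * (g hi + ∫ t, g t ∂ν) - hi)) := by
  have hlower : Tendsto (fun μ => ⨍ t in Iic μ, g t ∂ν) (𝓝[<] hi) (𝓝 (∫ t, g t ∂ν)) := by
    rw [← setAverage_eq_integral_of_ae_mem (hsupp.mono fun t ht => ht.2)]
    exact (continuousAt_setAverage_Iic hgi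
      (measure_Iic_ne_zero_of_forall_Ioo hpos hlohi le_rfl)).tendsto.mono_left nhdsWithin_le_nhds
  have hupper : Tendsto (fun μ => ⨍ t in Ioi μ, g t ∂ν) (𝓝[<] hi) (𝓝 (g hi)) := by
    refine tendsto_setAverage_of_ae_dist_lt hg.continuousAt hgi ?_ fun r hr => ?_
    · filter_upwards [Ioo_mem_nhdsLT hlohi] with x hx
      exact measure_Ioi_ne_zero_of_forall_Ioo hpos hx.1.le hx.2
    · filter_upwards [Ioo_mem_nhdsLT (sub_lt_self hi hr)] with x hx
      filter_upwards [ae_restrict_mem measurableSet_Ioi, ae_restrict_of_ae hsupp] with t htx ht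
      rw [Real.dist_eq, abs_of_nonpos (sub_nonpos.2 ht.2)]
      linarith [hx.1, show x < t from htx]
  rw [add_comm]
  exact ((hlower.add hupper).const_mul _).sub (tendsto_id.mono_left nhdsWithin_le_nhds)

end twoIntervalGap

theorem two_interval_equilibrium_exists_general
    {Ωs : Type*} [MeasureSpace Ωs] [IsProbabilityMeasure (ℙ : Measure Ωs)]
    (γ δ lo hi : ℝ) (hlohi : lo < hi)
    (θ : Ωs → ℝ) (hθmeas : Measurable θ)
    -- the law of θ has a continuous, strictly positive density `f` on `[lo, hi]`
    (f : ℝ → ℝ)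
    (hf_cont : ContinuousOn f (Icc lo hi))
    (hf_pos : ∀ t ∈ Icc lo hi, 0 < f t)
    (hlaw : Measure.map θ ℙ =
      (volume.restrict (Icc lo hi)).withDensity (fun t => ENNReal.ofReal (f t)))
    (Eθ : ℝ) (hEθ : Eθ = ∫ ω, θ ω ∂ℙ)
    (D : ℝ → ℝ)
    (hD : ∀ μ, D μ =
      (1 / 2) *
        ((∫ ω in {w : Ωs | θ w ≤ μ}, (γ * θ ω + δ) ∂ℙ) /
            (ℙ {w : Ωs | θ w ≤ μ}).toReal +
         (∫ ω in {w : Ωs | μ < θ w}, (γ * θ ω + δ) ∂ℙ) /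
            (ℙ {w : Ωs | μ < θ w}).toReal) - μ)
    (hlow : (2 - γ) * lo - γ * Eθ < 2 * δ)
    (hhigh : 2 * δ < (2 - γ) * hi - γ * Eθ) :
    Tendsto D (nhdsWithin lo (Ioi lo))
        (nhds ((1 / 2) * ((γ * lo + δ) + (γ * Eθ + δ)) - lo)) ∧
    0 < (1 / 2) * ((γ * lo + δ) + (γ * Eθ + δ)) - lo ∧
    Tendsto D (nhdsWithin hi (Iio hi))
        (nhds ((1 / 2) * ((γ * hi + δ) + (γ * Eθ + δ)) - hi)) ∧
    (1 / 2) * ((γ * hi + δ) + (γ * Eθ + δ)) - hi < 0 ∧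
    ∃ μ₁ ∈ Ioo lo hi, D μ₁ = 0 := by
  set g : ℝ → ℝ := fun t => γ * t + δ
  set ν := (volume.restrict (Icc lo hi)).withDensity fun t => ENNReal.ofReal (f t)
  have : IsProbabilityMeasure ν := hlaw ▸ Measure.isProbabilityMeasure_map hθmeas.aemeasurable
  have hsupp : ∀ᵐ t ∂ν, t ∈ Icc lo hi :=
    (withDensity_absolutelyContinuous _ _).ae_le (ae_restrict_mem measurableSet_Icc)
  have hpos : ∀ a b, lo ≤ a → a < b → b ≤ hi → ν (Ioo a b) ≠ 0 := fun a b ha hab hb =>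
    withDensity_ofReal_apply_ne_zero measurableSet_Icc (hf_cont.aemeasurable measurableSet_Icc)
      hf_pos (Ioo_subset_Icc_self.trans (Icc_subset_Icc ha hb)) (by simpa using hab)
  have hg : Continuous g := by fun_prop
  have hgi : Integrable g ν := hg.integrable_of_ae_mem_Icc hsupp
  have hmean : ∫ t, g t ∂ν = γ * Eθ + δ := by
    have hid : ∫ t, t ∂ν = Eθ := by
      rw [hEθ, ← hlaw, integral_map (f := fun t => t) hθmeas.aemeasurable aestronglyMeasurable_id]
    simp only [g]
    rw [integral_add (((continuous_id' (X := ℝ)).integrable_of_ae_mem_Icc hsupp).const_mul γ)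
      (integrable_const δ), integral_const_mul, hid, integral_const]
    simp
  have hDν : D = twoIntervalGap ν g := funext fun μ => by
    rw [hD, twoIntervalGap, ← hlaw,
      setAverage_map hθmeas.aemeasurable measurableSet_Iic hg.aestronglyMeasurable,
      setAverage_map hθmeas.aemeasurable measurableSet_Ioi hg.aestronglyMeasurable]
    rfl
  have hleft := twoIntervalGap.tendsto_nhdsGT hlohi hg hgi hsupp hpos
  have hright := twoIntervalGap.tendsto_nhdsLT hlohi hg hgi hsupp hpos
  rw [hmean] at hleft hright
  have hsign_lo : 0 < (1 / 2) * ((γ * lo + δ) + (γ * Eθ + δ)) - lo := by linarith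
  have hsign_hi : (1 / 2) * ((γ * hi + δ) + (γ * Eθ + δ)) - hi < 0 := by linarith
  rw [hDν]
  exact ⟨hleft, hsign_lo, hright, hsign_hi, exists_mem_Ioo_eq_zero_of_tendsto hlohi
    (twoIntervalGap.continuousOn hgi hpos) hleft hright hsign_lo hsign_hi⟩

/-- Existence of a two-interval informative equilibrium: under the stated price
condition, the indifference gap `D` is positive near `θ̲`, negative near `θ̄`
(with the stated boundary limits), and hence has a root in `(θ̲, θ̄)`. -/
theorem two_interval_equilibrium_exists
    {Ωs : Type*} [MeasureSpace Ωs] [IsProbabilityMeasure (ℙ : Measure Ωs)]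
    (γ δ lo hi : ℝ) (hγ0 : 0 < γ) (hγ1 : γ < 1) (hlohi : lo < hi)
    (θ : Ωs → ℝ) (hθmeas : Measurable θ)
    -- the law of θ has a continuous, strictly positive density `f` on `[lo, hi]`
    (f : ℝ → ℝ)
    (hf_cont : ContinuousOn f (Icc lo hi))
    (hf_pos : ∀ t ∈ Icc lo hi, 0 < f t)
    (hlaw : Measure.map θ ℙ =
      (volume.restrict (Icc lo hi)).withDensity (fun t => ENNReal.ofReal (f t)))
    (Eθ : ℝ) (hEθ : Eθ = ∫ ω, θ ω ∂ℙ)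
    (D : ℝ → ℝ)
    (hD : ∀ μ, D μ =
      (1 / 2) *
        ((∫ ω in {w : Ωs | θ w ≤ μ}, (γ * θ ω + δ) ∂ℙ) /
            (ℙ {w : Ωs | θ w ≤ μ}).toReal +
         (∫ ω in {w : Ωs | μ < θ w}, (γ * θ ω + δ) ∂ℙ) /
            (ℙ {w : Ωs | μ < θ w}).toReal) - μ)
    (hlow : (2 - γ) * lo - γ * Eθ < 2 * δ)
    (hhigh : 2 * δ < (2 - γ) * hi - γ * Eθ) :
    Tendsto D (nhdsWithin lo (Ioi lo))
        (nhds ((1 / 2) * ((γ * lo + δ) + (γ * Eθ + δ)) - lo)) ∧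
    0 < (1 / 2) * ((γ * lo + δ) + (γ * Eθ + δ)) - lo ∧
    Tendsto D (nhdsWithin hi (Iio hi))
        (nhds ((1 / 2) * ((γ * hi + δ) + (γ * Eθ + δ)) - hi)) ∧
    (1 / 2) * ((γ * hi + δ) + (γ * Eθ + δ)) - hi < 0 ∧
    ∃ μ₁ ∈ Ioo lo hi, D μ₁ = 0 :=
  two_interval_equilibrium_exists_general γ δ lo hi hlohi θ hθmeas f hf_cont hf_pos hlaw Eθ hEθ D hD
    hlow hhigh
end
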